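/- arXiv:cs/0604097 — 4 statements merged into one kernel-verified Lean document; each statement's English description precedes it below -/
import Mathlib

section
/- Let {ψ_i}_{i=1}^n be an orthonormal basis of ℝ^n, f ∈ ℝ^n, and 0 ≤ B < n. Then the (B+1)-st largest value among the n numbers |⟨f, ψ_i⟩| / ‖ψ_i‖₁ is a lower bound on the optimal B-term ℓ_∞ error: it is at most min over B-sparse z of ‖f − Σ_i z_i ψ_i‖_∞. -/
/-- Standard inner product on `ℝ^n`. -/
noncomputable def dotp {n : ℕ} (x y : Fin n → ℝ) : ℝ := ∑ j, x j * y j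

/-- The `ℓ₁` norm on `ℝ^n`. -/
noncomputable def l1Norm {n : ℕ} (x : Fin n → ℝ) : ℝ := ∑ j, |x j|

/-- The `ℓ∞` norm on `ℝ^n`. -/
noncomputable def linfNorm {n : ℕ} (x : Fin n → ℝ) : ℝ := ⨆ j, |x j|

/-- A vector is `B`-sparse if it has at most `B` nonzero components. -/
def Sparse {n : ℕ} (B : ℕ) (z : Fin n → ℝ) : Prop :=
  ({i | z i ≠ 0} : Set (Fin n)).ncard ≤ B

/-! If `z` is `B`-sparse, some index among the `B + 1` largest ratios `|⟨f, ψ_i⟩| / ‖ψ_i‖₁` has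
`z_i = 0`. For such `i`, orthonormality gives `⟨f − Σ_k z_k ψ_k, ψ_i⟩ = ⟨f, ψ_i⟩`, and Hölder's
inequality `|⟨g, ψ_i⟩| ≤ ‖g‖_∞ ‖ψ_i‖₁` bounds that ratio by the `ℓ_∞` error. -/

lemma abs_le_linfNorm {n : ℕ} (x : Fin n → ℝ) (j : Fin n) : |x j| ≤ linfNorm x :=
  le_ciSup (f := fun j => |x j|) (Set.finite_range _).bddAbove j

lemma abs_dotp_le_linfNorm_mul_l1Norm {n : ℕ} (x y : Fin n → ℝ) :
    |dotp x y| ≤ linfNorm x * l1Norm y := by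
  rw [dotp, l1Norm, Finset.mul_sum]
  calc |∑ j, x j * y j| ≤ ∑ j, |x j * y j| := Finset.abs_sum_le_sum_abs _ _
    _ ≤ ∑ j, linfNorm x * |y j| := Finset.sum_le_sum fun j _ => by
        rw [abs_mul]
        exact mul_le_mul_of_nonneg_right (abs_le_linfNorm x j) (abs_nonneg _)

lemma abs_dotp_div_l1Norm_le_linfNorm {n : ℕ} (x y : Fin n → ℝ) :
    |dotp x y| / l1Norm y ≤ linfNorm x :=
  div_le_of_le_mul₀ (Finset.sum_nonneg fun j _ => abs_nonneg (y j))
    (Real.iSup_nonneg fun j => abs_nonneg (x j)) (abs_dotp_le_linfNorm_mul_l1Norm x y)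

lemma dotp_sub_sum_mul_orthonormal {n : ℕ} {ψ : Fin n → Fin n → ℝ}
    (horth : ∀ i k, dotp (ψ i) (ψ k) = if i = k then (1 : ℝ) else 0)
    (f z : Fin n → ℝ) (k : Fin n) :
    dotp (fun j => f j - ∑ i, z i * ψ i j) (ψ k) = dotp f (ψ k) - z k := by
  have hcoeff : ∑ j, (∑ i, z i * ψ i j) * ψ k j = z k := by
    calc ∑ j, (∑ i, z i * ψ i j) * ψ k j = ∑ i, z i * dotp (ψ i) (ψ k) := by
          simp only [dotp, Finset.sum_mul, Finset.mul_sum, mul_assoc]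
          exact Finset.sum_comm
      _ = z k := by simp [horth]
  simp only [dotp, sub_mul, Finset.sum_sub_distrib, hcoeff]

lemma Sparse.exists_eq_zero_of_lt_card {n B : ℕ} {z : Fin n → ℝ} (hz : Sparse B z)
    {s : Finset (Fin n)} (hs : B < s.card) : ∃ i ∈ s, z i = 0 := by
  by_contra! hcon
  have hsub : (s : Set (Fin n)) ⊆ {i | z i ≠ 0} := hcon
  have hcard := Set.ncard_le_ncard hsub
  rw [Set.ncard_coe_finset] at hcard
  exact (hs.trans_le hcard).not_ge hz

/-- for an orthonormal basis `{ψ_i}` of `ℝ^n`, `f ∈ ℝ^n` and `0 ≤ B < n`,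
the `(B+1)`-st largest value among the numbers `y i = |⟨f, ψ_i⟩| / ‖ψ_i‖₁` (expressed by
sorting them in nonincreasing order via a permutation `σ` and taking position `B`)
is at most `‖f − Σ_i z_i ψ_i‖_∞` for every `B`-sparse `z`, i.e. it lower bounds the
optimal `B`-term `ℓ_∞` error. -/
theorem stmt2 {n B : ℕ} (hB : B < n) (ψ : Fin n → Fin n → ℝ)
    (horth : ∀ i k, dotp (ψ i) (ψ k) = if i = k then (1 : ℝ) else 0)
    (f : Fin n → ℝ)
    (y : Fin n → ℝ) (hy : ∀ i, y i = |dotp f (ψ i)| / l1Norm (ψ i))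
    (σ : Equiv.Perm (Fin n)) (hσ : ∀ i j : Fin n, i ≤ j → y (σ j) ≤ y (σ i)) :
    ∀ z : Fin n → ℝ, Sparse B z →
      y (σ ⟨B, hB⟩) ≤ linfNorm (fun j => f j - ∑ i, z i * ψ i j) := by
  intro z hz
  have hcard : B < ((Finset.Iic (⟨B, hB⟩ : Fin n)).map σ.toEmbedding).card := by
    rw [Finset.card_map, Fin.card_Iic]
    exact Nat.lt_succ_self B
  obtain ⟨_, hi, hzi⟩ := hz.exists_eq_zero_of_lt_card hcard
  obtain ⟨j, hjB, rfl⟩ := Finset.mem_map.mp hi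
  calc y (σ ⟨B, hB⟩) ≤ y (σ j) := hσ j _ (Finset.mem_Iic.mp hjB)
    _ = |dotp (fun j => f j - ∑ i, z i * ψ i j) (ψ (σ j))| / l1Norm (ψ (σ j)) := by
        rw [hy, dotp_sub_sum_mul_orthonormal horth, show z (σ j) = 0 from hzi, sub_zero]
    _ ≤ _ := abs_dotp_div_l1Norm_le_linfNorm _ _
end

section
/- Let 1 ≤ p ≤ 2 and let p' be the Hölder conjugate of p. Let v ∈ ℝ^n have at most s ≥ 1 nonzero entries, with ‖v‖₂ ≤ 1 and ‖v‖_∞ ≤ C · s^{−1/2} for some C > 0. Then ‖v‖_p · ‖v‖_{p'} ≤ C. -/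
/-!
On the support `S` of `v`, Hölder's inequality gives `‖v‖_p ≤ |S|^(1/p - 1/2) ‖v‖₂`, and
`∑ |v j|^p' ≤ ‖v‖_∞^(p' - 2) ‖v‖₂²` gives `‖v‖_p' ≤ ‖v‖_∞^θ ‖v‖₂^(1 - θ)` with
`θ = 2/p - 1 = 1 - 2/p' ∈ [0, 1]`. Hence `‖v‖_p ‖v‖_p' ≤ (|S|^(1/2) ‖v‖_∞)^θ ‖v‖₂^(2 - θ)`.
Here `|S|^(1/2) ‖v‖_∞ ≤ C`, `‖v‖₂ ≤ 1` and `‖v‖₂ ≤ |S|^(1/2) ‖v‖_∞ ≤ C`, so the right-hand side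
is at most `C^θ · 1 · C^(1 - θ) = C`.
-/

open scoped ENNReal

/-- The `ℓ_p` norm on `ℝ^n`, for `p ∈ [1, ∞]` (extended-real exponent). -/
noncomputable def lpNorm {n : ℕ} (p : ℝ≥0∞) (x : Fin n → ℝ) : ℝ :=
  if p = ∞ then ⨆ j, |x j| else (∑ j, |x j| ^ p.toReal) ^ (1 / p.toReal)

open Finset

section ConjugateExponents

variable {p q : ℝ≥0∞}

lemma ENNReal.inv_eq_one_sub_inv_of_one_div_add_one_div (hpq : 1 / p + 1 / q = 1) :
    q⁻¹ = 1 - p⁻¹ := by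
  simp only [one_div] at hpq
  exact ENNReal.eq_sub_of_add_eq (ne_top_of_le_ne_top ENNReal.one_ne_top (hpq ▸ le_self_add))
    (add_comm p⁻¹ q⁻¹ ▸ hpq)

lemma ENNReal.toReal_inv_eq_one_sub_of_one_div_add_one_div (hpq : 1 / p + 1 / q = 1) :
    q.toReal⁻¹ = 1 - p.toReal⁻¹ := by
  have hp : p⁻¹ ≤ 1 := by
    simp only [one_div] at hpq
    exact hpq ▸ le_self_add
  rw [← ENNReal.toReal_inv, ← ENNReal.toReal_inv,
    ENNReal.inv_eq_one_sub_inv_of_one_div_add_one_div hpq,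
    ENNReal.toReal_sub_of_le hp ENNReal.one_ne_top, ENNReal.toReal_one]

lemma ENNReal.two_le_of_one_div_add_one_div (hp2 : p ≤ 2) (hpq : 1 / p + 1 / q = 1) : 2 ≤ q := by
  rw [← ENNReal.inv_le_inv, ENNReal.inv_eq_one_sub_inv_of_one_div_add_one_div hpq,
    ← ENNReal.one_sub_inv_two]
  exact tsub_le_tsub_left (ENNReal.inv_le_inv.2 hp2) 1

end ConjugateExponents

lemma rpow_mul_rpow_two_sub_le {a b c θ : ℝ} (hθ0 : 0 ≤ θ) (hθ1 : θ ≤ 1) (ha : 0 ≤ a)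
    (hac : a ≤ c) (hb : 0 ≤ b) (hb1 : b ≤ 1) (hbc : b ≤ c) : a ^ θ * b ^ (2 - θ) ≤ c := by
  have hc : 0 ≤ c := ha.trans hac
  calc a ^ θ * b ^ (2 - θ) = a ^ θ * (b * b ^ (1 - θ)) := by
        rw [← Real.rpow_one_add' hb (by linarith)]; ring_nf
    _ ≤ c ^ θ * (1 * c ^ (1 - θ)) := by gcongr
    _ = c := by rw [one_mul, ← Real.rpow_add' hc (by norm_num), add_sub_cancel, Real.rpow_one]

lemma sum_filter_ne_zero_abs_rpow {ι : Type*} [Fintype ι] (x : ι → ℝ) {r : ℝ} (hr : r ≠ 0) :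
    ∑ j with x j ≠ 0, |x j| ^ r = ∑ j, |x j| ^ r :=
  sum_filter_of_ne fun j _ h hj => h (by simp [hj, Real.zero_rpow hr])

section lpNorm

variable {n : ℕ}

lemma lpNorm_nonneg (p : ℝ≥0∞) (x : Fin n → ℝ) : 0 ≤ lpNorm p x := by
  unfold lpNorm
  split_ifs
  · exact Real.iSup_nonneg fun j => abs_nonneg _
  · exact Real.rpow_nonneg (sum_nonneg fun j _ => by positivity) _

lemma lpNorm_of_ne_top {p : ℝ≥0∞} (hp : p ≠ ∞) (x : Fin n → ℝ) :
    lpNorm p x = (∑ j, |x j| ^ p.toReal) ^ (1 / p.toReal) :=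
  if_neg hp

lemma lpNorm_two (x : Fin n → ℝ) : lpNorm 2 x = (∑ j, |x j| ^ (2 : ℝ)) ^ (1 / 2 : ℝ) := by
  simp [lpNorm_of_ne_top]

lemma abs_le_lpNorm_top (x : Fin n → ℝ) (j : Fin n) : |x j| ≤ lpNorm ∞ x := by
  rw [lpNorm, if_pos rfl]
  exact le_ciSup (f := fun j => |x j|) (Set.finite_range _).bddAbove j

lemma lpNorm_le_card_support_rpow_mul_lpNorm_two {p : ℝ≥0∞} (hp0 : p ≠ 0) (hp2 : p ≤ 2)
    (x : Fin n → ℝ) :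
    lpNorm p x ≤ (#{j | x j ≠ 0} : ℝ) ^ (1 / p.toReal - 1 / 2) * lpNorm 2 x := by
  have hp : p ≠ ∞ := ne_top_of_le_ne_top ENNReal.ofNat_ne_top hp2
  set t := p.toReal
  have ht0 : 0 < t := ENNReal.toReal_pos hp0 hp
  have ht2 : t ≤ 2 := by simpa using ENNReal.toReal_mono ENNReal.ofNat_ne_top hp2
  have hsum : (∑ j, |x j| ^ t) ^ (2 / t) ≤
      (#{j | x j ≠ 0} : ℝ) ^ (2 / t - 1) * ∑ j, |x j| ^ (2 : ℝ) := by
    have h := Real.rpow_sum_le_const_mul_sum_rpow_of_nonneg {j | x j ≠ 0}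
      (f := fun j => |x j| ^ t) ((one_le_div ht0).2 ht2) fun j _ => by positivity
    simp_rw [← Real.rpow_mul (abs_nonneg _), mul_div_cancel₀ 2 ht0.ne',
      sum_filter_ne_zero_abs_rpow x ht0.ne', sum_filter_ne_zero_abs_rpow x two_ne_zero] at h
    exact h
  calc lpNorm p x = (∑ j, |x j| ^ t) ^ (1 / t) := lpNorm_of_ne_top hp x
    _ = ((∑ j, |x j| ^ t) ^ (2 / t)) ^ (1 / 2 : ℝ) := by
        rw [← Real.rpow_mul (sum_nonneg fun j _ => by positivity)]
        congr 1; field_simp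
    _ ≤ ((#{j | x j ≠ 0} : ℝ) ^ (2 / t - 1) * ∑ j, |x j| ^ (2 : ℝ)) ^ (1 / 2 : ℝ) := by
        gcongr
    _ = _ := by
        rw [lpNorm_two, Real.mul_rpow (by positivity) (sum_nonneg fun j _ => by positivity),
          ← Real.rpow_mul (by positivity)]
        congr 2; ring

lemma lpNorm_le_card_support_rpow_mul_lpNorm_top {p : ℝ≥0∞} (hp0 : p ≠ 0) (hp : p ≠ ∞)
    (x : Fin n → ℝ) :
    lpNorm p x ≤ (#{j | x j ≠ 0} : ℝ) ^ (1 / p.toReal) * lpNorm ∞ x := by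
  set t := p.toReal
  have ht0 : 0 < t := ENNReal.toReal_pos hp0 hp
  have hsum : ∑ j, |x j| ^ t ≤ #{j | x j ≠ 0} * lpNorm ∞ x ^ t := by
    rw [← sum_filter_ne_zero_abs_rpow x ht0.ne', ← nsmul_eq_mul, ← sum_const]
    gcongr with j
    exact abs_le_lpNorm_top x j
  calc lpNorm p x ≤ (#{j | x j ≠ 0} * lpNorm ∞ x ^ t) ^ (1 / t) := by
        rw [lpNorm_of_ne_top hp]
        gcongr
    _ = _ := by
        rw [Real.mul_rpow (by positivity) (Real.rpow_nonneg (lpNorm_nonneg _ _) _),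
          ← Real.rpow_mul (lpNorm_nonneg _ _),
          mul_one_div_cancel ht0.ne', Real.rpow_one]

lemma lpNorm_le_lpNorm_top_rpow_mul_lpNorm_two_rpow {q : ℝ≥0∞} (hq : 2 ≤ q) (x : Fin n → ℝ) :
    lpNorm q x ≤ lpNorm ∞ x ^ (1 - 2 / q.toReal) * lpNorm 2 x ^ (2 / q.toReal) := by
  rcases eq_or_ne q ∞ with rfl | hq_top
  -- `∞.toReal = 0`, so both sides are `‖x‖_∞`.
  · simp
  set u := q.toReal
  have hu2 : 2 ≤ u := by simpa using ENNReal.toReal_mono hq_top hq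
  have hsum : ∑ j, |x j| ^ u ≤ lpNorm ∞ x ^ (u - 2) * ∑ j, |x j| ^ (2 : ℝ) := by
    rw [mul_sum]
    gcongr with j
    rw [← sub_add_cancel u 2, Real.rpow_add' (abs_nonneg _) (by linarith), sub_add_cancel]
    exact mul_le_mul_of_nonneg_right
      (Real.rpow_le_rpow (abs_nonneg _) (abs_le_lpNorm_top x j) (by linarith)) (by positivity)
  calc lpNorm q x ≤ (lpNorm ∞ x ^ (u - 2) * ∑ j, |x j| ^ (2 : ℝ)) ^ (1 / u) := by
        rw [lpNorm_of_ne_top hq_top]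
        gcongr
    _ = _ := by
        rw [lpNorm_two, Real.mul_rpow (Real.rpow_nonneg (lpNorm_nonneg _ _) _)
          (sum_nonneg fun j _ => by positivity), ← Real.rpow_mul (lpNorm_nonneg _ _),
          ← Real.rpow_mul (sum_nonneg fun j _ => by positivity)]
        congr 2 <;> field_simp

lemma lpNorm_mul_lpNorm_le_of_one_div_add_one_div {p q : ℝ≥0∞} (hp1 : 1 ≤ p)
    (hp2 : p ≤ 2) (hpq : 1 / p + 1 / q = 1) (x : Fin n → ℝ) :
    lpNorm p x * lpNorm q x ≤
      ((#{j | x j ≠ 0} : ℝ) ^ (1 / 2 : ℝ) * lpNorm ∞ x) ^ (2 / p.toReal - 1) *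
        lpNorm 2 x ^ (3 - 2 / p.toReal) := by
  set t := p.toReal
  have ht1 : 1 ≤ t := by
    simpa using ENNReal.toReal_mono (ne_top_of_le_ne_top ENNReal.ofNat_ne_top hp2) hp1
  have hq : 2 / q.toReal = 2 - 2 / t := by
    rw [div_eq_mul_inv, ENNReal.toReal_inv_eq_one_sub_of_one_div_add_one_div hpq]; ring
  have hP := lpNorm_le_card_support_rpow_mul_lpNorm_two (zero_lt_one.trans_le hp1).ne' hp2 x
  have hQ := lpNorm_le_lpNorm_top_rpow_mul_lpNorm_two_rpow
    (ENNReal.two_le_of_one_div_add_one_div hp2 hpq) x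
  rw [hq, show 1 - (2 - 2 / t) = 2 / t - 1 by ring] at hQ
  calc lpNorm p x * lpNorm q x
      ≤ ((#{j | x j ≠ 0} : ℝ) ^ (1 / t - 1 / 2) * lpNorm 2 x) *
          (lpNorm ∞ x ^ (2 / t - 1) * lpNorm 2 x ^ (2 - 2 / t)) :=
        mul_le_mul hP hQ (lpNorm_nonneg _ _) (mul_nonneg (by positivity) (lpNorm_nonneg _ _))
    _ = _ := by
        have h2t : 2 / t ≤ 2 := div_le_self two_pos.le ht1
        rw [Real.mul_rpow (by positivity) (lpNorm_nonneg _ _), ← Real.rpow_mul (by positivity),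
          show 3 - 2 / t = 1 + (2 - 2 / t) by ring,
          Real.rpow_add' (lpNorm_nonneg _ _) (by linarith), Real.rpow_one,
          show 1 / 2 * (2 / t - 1) = 1 / t - 1 / 2 by ring]
        ring

end lpNorm

theorem stmt3_general {n : ℕ} (p q : ℝ≥0∞) (hp1 : 1 ≤ p) (hp2 : p ≤ 2)
    (hpq : 1 / p + 1 / q = 1)
    (v : Fin n → ℝ) (s : ℕ) (hs : 1 ≤ s)
    (hsupp : ({j | v j ≠ 0} : Set (Fin n)).ncard ≤ s)
    (h2 : lpNorm 2 v ≤ 1)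
    (C : ℝ)
    (hinf : lpNorm ∞ v ≤ C * (s : ℝ) ^ (-(1 : ℝ) / 2)) :
    lpNorm p v * lpNorm q v ≤ C := by
  have hk : (#{j | v j ≠ 0} : ℝ) ≤ s := by
    rw [Set.ncard_eq_toFinset_card'] at hsupp
    simpa using hsupp
  have hs0 : (0 : ℝ) < s := by exact_mod_cast hs
  have hspread : (#{j | v j ≠ 0} : ℝ) ^ (1 / 2 : ℝ) * lpNorm ∞ v ≤ C := calc
    _ ≤ (s : ℝ) ^ (1 / 2 : ℝ) * (C * (s : ℝ) ^ (-(1 : ℝ) / 2)) := by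
        gcongr
        exact lpNorm_nonneg _ _
    _ = C := by rw [mul_left_comm, ← Real.rpow_add hs0]; norm_num
  have hl2 : lpNorm 2 v ≤ C := by
    simpa using
      (lpNorm_le_card_support_rpow_mul_lpNorm_top two_ne_zero ENNReal.ofNat_ne_top v).trans hspread
  have ht1 : 1 ≤ p.toReal := by
    simpa using ENNReal.toReal_mono (ne_top_of_le_ne_top ENNReal.ofNat_ne_top hp2) hp1
  have ht2 : p.toReal ≤ 2 := by simpa using ENNReal.toReal_mono ENNReal.ofNat_ne_top hp2
  calc lpNorm p v * lpNorm q v ≤ _ := lpNorm_mul_lpNorm_le_of_one_div_add_one_div hp1 hp2 hpq v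
    _ ≤ C := by
      rw [show 3 - 2 / p.toReal = 2 - (2 / p.toReal - 1) by ring]
      refine rpow_mul_rpow_two_sub_le ?_ ?_ (mul_nonneg (by positivity) (lpNorm_nonneg _ _))
        hspread (lpNorm_nonneg _ _) h2 hl2
      · rw [sub_nonneg, le_div_iff₀ (by linarith)]; linarith
      · rw [sub_le_iff_le_add, div_le_iff₀ (by linarith)]; linarith

/-- let `1 ≤ p ≤ 2` with Hölder conjugate `q` (`1/p + 1/q = 1`, with
`q = ∞` when `p = 1`).  If `v ∈ ℝ^n` has at most `s ≥ 1` nonzero entries,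
`‖v‖₂ ≤ 1` and `‖v‖_∞ ≤ C · s^{−1/2}` for some `C > 0`, then
`‖v‖_p · ‖v‖_q ≤ C`. -/
theorem stmt3 {n : ℕ} (p q : ℝ≥0∞) (hp1 : 1 ≤ p) (hp2 : p ≤ 2)
    (hpq : 1 / p + 1 / q = 1)
    (v : Fin n → ℝ) (s : ℕ) (hs : 1 ≤ s)
    (hsupp : ({j | v j ≠ 0} : Set (Fin n)).ncard ≤ s)
    (h2 : lpNorm 2 v ≤ 1)
    (C : ℝ) (hC : 0 < C)
    (hinf : lpNorm ∞ v ≤ C * (s : ℝ) ^ (-(1 : ℝ) / 2)) :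
    lpNorm p v * lpNorm q v ≤ C :=
  stmt3_general p q hp1 hp2 hpq v s hs hsupp h2 C hinf
end

section
/- Let {ψ_i}_{i=1}^n be an orthonormal basis of ℝ^n with overlap at most K, let 1 ≤ p < ∞ with Hölder conjugate p', let f ∈ ℝ^n and B ≤ n. Let S ⊆ {1,…,n} with |S| = B consist of indices of the B largest values of |⟨f, ψ_k⟩| / ‖ψ_k‖_{p'}. Then Σ_{k∉S} |⟨f, ψ_k⟩|^p / ‖ψ_k‖_{p'}^p ≤ K · E^p, where E = min over B-sparse z of ‖f − Σ_i z_i ψ_i‖_p. -/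
/-!
Fix any `B`-sparse `z` with support `T` and put `g = f - ∑ zᵢ ψᵢ`. For `k ∉ T`
orthonormality gives `⟨f, ψₖ⟩ = ⟨g, ψₖ⟩`, and Hölder's inequality on the support of `ψₖ`
bounds `|⟨f, ψₖ⟩|ᵖ / ‖ψₖ‖_{p'}ᵖ` by the mass of `|g|ᵖ` on that support. Summing over
`k ∉ T`, every coordinate is counted at most `K` times, so the sum is at most `K ‖g‖ₚᵖ`.
Since `S` collects the `B` largest ratios, the sum over `k ∉ S` is no larger than the one
over `k ∉ T`; taking the infimum over `z` finishes the proof.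
-/

open scoped ENNReal

open Finset

section Greedy

variable {ι : Type*} {c : ι → ℝ}

lemma sum_le_sum_of_card_le_of_forall_le {A B : Finset ι} (hAB : #A ≤ #B)
    (hB : ∀ b ∈ B, 0 ≤ c b) (hle : ∀ a ∈ A, ∀ b ∈ B, c a ≤ c b) :
    ∑ a ∈ A, c a ≤ ∑ b ∈ B, c b := by
  rcases A.eq_empty_or_nonempty with rfl | hA
  · simpa using sum_nonneg hB
  obtain ⟨b₀, hb₀, hmin⟩ := B.exists_min_image c (card_pos.1 ((card_pos.2 hA).trans_le hAB))
  calc ∑ a ∈ A, c a ≤ #A • c b₀ :=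
        sum_le_card_nsmul A c (c b₀) fun a ha => hle a ha b₀ hb₀
    _ ≤ #B • c b₀ := nsmul_le_nsmul_left (hB b₀ hb₀) hAB
    _ ≤ ∑ b ∈ B, c b := card_nsmul_le_sum B c (c b₀) hmin

lemma sum_compl_le_sum_compl_of_forall_le [Fintype ι] [DecidableEq ι] {S T : Finset ι}
    (hTS : #T ≤ #S) (hc : ∀ i ∈ S, 0 ≤ c i) (hS : ∀ i ∈ S, ∀ k ∉ S, c k ≤ c i) :
    ∑ k ∈ Sᶜ, c k ≤ ∑ k ∈ Tᶜ, c k := by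
  have hcard : #(T \ S) ≤ #(S \ T) := by
    have := card_sdiff_add_card_inter T S
    have := card_sdiff_add_card_inter S T
    rw [inter_comm] at this
    omega
  have hdiff : ∑ k ∈ T \ S, c k ≤ ∑ k ∈ S \ T, c k :=
    sum_le_sum_of_card_le_of_forall_le hcard (fun i hi => hc i (mem_sdiff.1 hi).1)
      fun k hk i hi => hS i (mem_sdiff.1 hi).1 k (mem_sdiff.1 hk).2
  have hsplitT := sum_inter_add_sum_sdiff T S c
  have hsplitS := sum_inter_add_sum_sdiff S T c
  rw [inter_comm] at hsplitS
  linarith [sum_add_sum_compl S c, sum_add_sum_compl T c]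

end Greedy

lemma sum_sum_support_le_mul_sum {ι α : Type*} [Fintype ι] [Fintype α] {K : ℕ}
    (ψ : ι → α → ℝ) (hK : ∀ j, ({i | ψ i j ≠ 0} : Set ι).ncard ≤ K) (A : Finset ι)
    {h : α → ℝ} (hh : ∀ j, 0 ≤ h j) :
    ∑ k ∈ A, ∑ j with ψ k j ≠ 0, h j ≤ K * ∑ j, h j := by
  have hKA : ∀ j, #{i ∈ A | ψ i j ≠ 0} ≤ K := fun j =>
    (card_le_card (filter_subset_filter _ (subset_univ A))).trans
      (by simpa [Set.ncard_eq_toFinset_card'] using hK j)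
  calc ∑ k ∈ A, ∑ j with ψ k j ≠ 0, h j = ∑ j, ∑ k ∈ A with ψ k j ≠ 0, h j :=
        sum_comm' fun k j => by simp [and_comm]
    _ = ∑ j, (#{k ∈ A | ψ k j ≠ 0} : ℝ) * h j := by simp only [sum_const, nsmul_eq_mul]
    _ ≤ ∑ j, (K : ℝ) * h j :=
        sum_le_sum fun j _ => mul_le_mul_of_nonneg_right (by exact_mod_cast hKA j) (hh j)
    _ = K * ∑ j, h j := (mul_sum ..).symm

lemma le_mul_csInf_rpow {s : Set ℝ} {L K r : ℝ} (hs : s.Nonempty) (hs₀ : ∀ e ∈ s, 0 ≤ e)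
    (hK : 0 ≤ K) (hr : 0 < r) (h : ∀ e ∈ s, L ≤ K * e ^ r) : L ≤ K * sInf s ^ r := by
  have hmono : MonotoneOn (fun e => K * e ^ r) s := fun a ha b _ hab =>
    mul_le_mul_of_nonneg_left (Real.rpow_le_rpow (hs₀ a ha) hab hr.le) hK
  have hcont : ContinuousWithinAt (fun e : ℝ => K * e ^ r) s (sInf s) :=
    ((Real.continuousAt_rpow_const _ _ (Or.inr hr.le)).const_mul K).continuousWithinAt
  rw [hmono.map_csInf_of_continuousWithinAt hcont hs ⟨0, hs₀⟩]
  exact le_csInf (hs.image _) (by rintro _ ⟨e, he, rfl⟩; exact h e he)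

section Holder

variable {n : ℕ}

lemma lpNorm_rpow_toReal {p : ℝ≥0∞} (hp₀ : p ≠ 0) (hp : p ≠ ∞) (x : Fin n → ℝ) :
    lpNorm p x ^ p.toReal = ∑ j, |x j| ^ p.toReal := by
  rw [lpNorm, if_neg hp, one_div, Real.rpow_inv_rpow
    (sum_nonneg fun j _ => Real.rpow_nonneg (abs_nonneg _) _)
    (ENNReal.toReal_ne_zero.2 ⟨hp₀, hp⟩)]

lemma abs_dotp_le_lpNorm_mul_lpNorm {p q : ℝ≥0∞} [p.HolderConjugate q] (hp : p ≠ ∞)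
    (x y : Fin n → ℝ) : |dotp x y| ≤ lpNorm p x * lpNorm q y := by
  have hxy : |dotp x y| ≤ ∑ j, |x j| * |y j| := by
    simpa only [dotp, abs_mul] using abs_sum_le_sum_abs (fun j => x j * y j) univ
  by_cases hq : q = ∞
  · obtain rfl : p = 1 := (ENNReal.HolderConjugate.eq_top_iff_eq_one q p).1 hq
    subst hq
    calc |dotp x y| ≤ ∑ j, |x j| * |y j| := hxy
      _ ≤ ∑ j, |x j| * ⨆ i, |y i| := sum_le_sum fun j _ => mul_le_mul_of_nonneg_left
          (le_ciSup (f := fun i => |y i|) (Set.finite_range _).bddAbove j) (abs_nonneg _)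
      _ = lpNorm 1 x * lpNorm ∞ y := by simp [lpNorm, sum_mul]
  · calc |dotp x y| ≤ ∑ j, |x j| * |y j| := hxy
      _ ≤ (∑ j, |x j| ^ p.toReal) ^ (1 / p.toReal) *
            (∑ j, |y j| ^ q.toReal) ^ (1 / q.toReal) := by
          simpa only [abs_abs] using Real.inner_le_Lp_mul_Lq univ (fun j => |x j|) (fun j => |y j|)
            (ENNReal.HolderConjugate.toReal_of_ne_top hp hq)
      _ = lpNorm p x * lpNorm q y := by rw [lpNorm, lpNorm, if_neg hp, if_neg hq]

lemma abs_dotp_rpow_le_sum_support_mul {p q : ℝ≥0∞} [p.HolderConjugate q] (hp : p ≠ ∞)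
    (g w : Fin n → ℝ) :
    |dotp g w| ^ p.toReal ≤ (∑ j with w j ≠ 0, |g j| ^ p.toReal) * lpNorm q w ^ p.toReal := by
  have hp₀ := ENNReal.HolderConjugate.ne_zero p q
  set g' : Fin n → ℝ := fun j => if w j ≠ 0 then g j else 0
  have hdot : dotp g w = dotp g' w :=
    sum_congr rfl fun j _ => by by_cases h : w j = 0 <;> simp [g', h]
  have hnorm : lpNorm p g' ^ p.toReal = ∑ j with w j ≠ 0, |g j| ^ p.toReal := by
    rw [lpNorm_rpow_toReal hp₀ hp, sum_filter]
    refine sum_congr rfl fun j _ => ?_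
    by_cases h : w j = 0 <;> simp [g', h, Real.zero_rpow (ENNReal.toReal_ne_zero.2 ⟨hp₀, hp⟩)]
  rw [hdot, ← hnorm, ← Real.mul_rpow (lpNorm_nonneg _ _) (lpNorm_nonneg _ _)]
  exact Real.rpow_le_rpow (abs_nonneg _) (abs_dotp_le_lpNorm_mul_lpNorm hp g' w)
    ENNReal.toReal_nonneg

end Holder

lemma dotp_sub_sum_mul_of_orthonormal {n : ℕ} {ι : Type*} [Fintype ι] [DecidableEq ι]
    (ψ : ι → Fin n → ℝ) {k : ι} (hk : ∀ i, dotp (ψ i) (ψ k) = if i = k then 1 else 0)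
    (f : Fin n → ℝ) (z : ι → ℝ) :
    dotp (fun j => f j - ∑ i, z i * ψ i j) (ψ k) = dotp f (ψ k) - z k := by
  have hcoeff : ∑ j, (∑ i, z i * ψ i j) * ψ k j = z k := by
    simp_rw [sum_mul, mul_assoc]
    rw [sum_comm]
    simp_rw [← mul_sum]
    change ∑ i, z i * dotp (ψ i) (ψ k) = z k
    simp [hk]
  simp only [dotp, sub_mul, sum_sub_distrib, hcoeff]

theorem sum_compl_rpow_div_le_of_sparse {n B K : ℕ} (ψ : Fin n → Fin n → ℝ)
    (horth : ∀ i k, dotp (ψ i) (ψ k) = if i = k then (1 : ℝ) else 0)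
    (hK : ∀ j : Fin n, ({i | ψ i j ≠ 0} : Set (Fin n)).ncard ≤ K)
    {p q : ℝ≥0∞} [p.HolderConjugate q] (hp : p ≠ ∞) (f : Fin n → ℝ)
    {S : Finset (Fin n)} (hcard : #S = B)
    (hS : ∀ i ∈ S, ∀ k ∉ S,
      |dotp f (ψ k)| / lpNorm q (ψ k) ≤ |dotp f (ψ i)| / lpNorm q (ψ i))
    {z : Fin n → ℝ} (hz : Sparse B z) :
    ∑ k ∈ Sᶜ, |dotp f (ψ k)| ^ p.toReal / lpNorm q (ψ k) ^ p.toReal ≤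
      K * lpNorm p (fun j => f j - ∑ i, z i * ψ i j) ^ p.toReal := by
  set r := p.toReal
  set g : Fin n → ℝ := fun j => f j - ∑ i, z i * ψ i j
  set c : Fin n → ℝ := fun k => |dotp f (ψ k)| ^ r / lpNorm q (ψ k) ^ r
  set T : Finset (Fin n) := {i | z i ≠ 0}
  have hratio : ∀ k, 0 ≤ |dotp f (ψ k)| / lpNorm q (ψ k) := fun k =>
    div_nonneg (abs_nonneg _) (lpNorm_nonneg _ _)
  have hc : ∀ k, c k = (|dotp f (ψ k)| / lpNorm q (ψ k)) ^ r := fun k =>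
    (Real.div_rpow (abs_nonneg _) (lpNorm_nonneg _ _) _).symm
  have hTS : #T ≤ #S := by simpa [T, hcard, Sparse, Set.ncard_eq_toFinset_card'] using hz
  have hcompl : ∑ k ∈ Sᶜ, c k ≤ ∑ k ∈ Tᶜ, c k :=
    sum_compl_le_sum_compl_of_forall_le hTS
      (fun i _ => hc i ▸ Real.rpow_nonneg (hratio i) _)
      fun i hi k hk => by
        rw [hc, hc]
        exact Real.rpow_le_rpow (hratio k) (hS i hi k hk) ENNReal.toReal_nonneg
  have hterm : ∀ k ∈ Tᶜ, c k ≤ ∑ j with ψ k j ≠ 0, |g j| ^ r := by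
    intro k hk
    have hfg : dotp f (ψ k) = dotp g (ψ k) := by
      rw [dotp_sub_sum_mul_of_orthonormal ψ (horth · k), show z k = 0 by simpa [T] using hk,
        sub_zero]
    exact div_le_of_le_mul₀ (Real.rpow_nonneg (lpNorm_nonneg _ _) _)
      (sum_nonneg fun j _ => Real.rpow_nonneg (abs_nonneg _) _)
      (hfg ▸ abs_dotp_rpow_le_sum_support_mul hp g (ψ k))
  calc ∑ k ∈ Sᶜ, c k ≤ ∑ k ∈ Tᶜ, c k := hcompl
    _ ≤ ∑ k ∈ Tᶜ, ∑ j with ψ k j ≠ 0, |g j| ^ r := sum_le_sum hterm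
    _ ≤ K * ∑ j, |g j| ^ r :=
        sum_sum_support_le_mul_sum ψ hK Tᶜ fun j => Real.rpow_nonneg (abs_nonneg _) _
    _ = K * lpNorm p g ^ r := by
        rw [lpNorm_rpow_toReal (ENNReal.HolderConjugate.ne_zero p q) hp]

theorem stmt6_general {n B K : ℕ} (ψ : Fin n → Fin n → ℝ)
    (horth : ∀ i k, dotp (ψ i) (ψ k) = if i = k then (1 : ℝ) else 0)
    (hK : ∀ j : Fin n, ({i | ψ i j ≠ 0} : Set (Fin n)).ncard ≤ K)
    (p q : ℝ≥0∞) (hptop : p ≠ ∞) (hpq : 1 / p + 1 / q = 1)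
    (f : Fin n → ℝ)
    (S : Finset (Fin n)) (hcard : S.card = B)
    (hS : ∀ i ∈ S, ∀ k ∉ S,
      |dotp f (ψ k)| / lpNorm q (ψ k) ≤ |dotp f (ψ i)| / lpNorm q (ψ i)) :
    ∑ k ∈ Sᶜ, |dotp f (ψ k)| ^ p.toReal / lpNorm q (ψ k) ^ p.toReal ≤
      (K : ℝ) *
        (sInf {e : ℝ | ∃ z : Fin n → ℝ, Sparse B z ∧
          e = lpNorm p (fun j => f j - ∑ i, z i * ψ i j)}) ^ p.toReal := by
  have : p.HolderConjugate q := ENNReal.holderConjugate_iff.2 (by simpa only [one_div] using hpq)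
  refine le_mul_csInf_rpow ⟨_, 0, by simp [Sparse], rfl⟩ ?_ K.cast_nonneg
    (ENNReal.toReal_pos (ENNReal.HolderConjugate.ne_zero p q) hptop) ?_
  · rintro e ⟨z, -, rfl⟩
    exact lpNorm_nonneg _ _
  · rintro e ⟨z, hz, rfl⟩
    exact sum_compl_rpow_div_le_of_sparse ψ horth hK hptop f hcard hS hz

/-- let `{ψ_i}` be an orthonormal basis of `ℝ^n` with overlap at most `K`,
`1 ≤ p < ∞` with Hölder conjugate `q`, `f ∈ ℝ^n` and `B ≤ n`.  If `S` is a set of `B`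
indices of the `B` largest values of `|⟨f, ψ_k⟩| / ‖ψ_k‖_q`, then
`Σ_{k∉S} |⟨f, ψ_k⟩|^p / ‖ψ_k‖_q^p ≤ K · E^p`, where `E` is the minimum over `B`-sparse
`z` of `‖f − Σ_i z_i ψ_i‖_p`. -/
theorem stmt6 {n B K : ℕ} (ψ : Fin n → Fin n → ℝ)
    (horth : ∀ i k, dotp (ψ i) (ψ k) = if i = k then (1 : ℝ) else 0)
    (hK : ∀ j : Fin n, ({i | ψ i j ≠ 0} : Set (Fin n)).ncard ≤ K)
    (p q : ℝ≥0∞) (hp1 : 1 ≤ p) (hptop : p ≠ ∞) (hpq : 1 / p + 1 / q = 1)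
    (f : Fin n → ℝ) (hB : B ≤ n)
    (S : Finset (Fin n)) (hcard : S.card = B)
    (hS : ∀ i ∈ S, ∀ k ∉ S,
      |dotp f (ψ k)| / lpNorm q (ψ k) ≤ |dotp f (ψ i)| / lpNorm q (ψ i)) :
    ∑ k ∈ Sᶜ, |dotp f (ψ k)| ^ p.toReal / lpNorm q (ψ k) ^ p.toReal ≤
      (K : ℝ) *
        (sInf {e : ℝ | ∃ z : Fin n → ℝ, Sparse B z ∧
          e = lpNorm p (fun j => f j - ∑ i, z i * ψ i j)}) ^ p.toReal :=
  stmt6_general ψ horth hK p q hptop hpq f S hcard hS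
end

section
/- Let {ψ_i}_{i=1}^n be an orthonormal basis of ℝ^n, f ∈ ℝ^n, let c_1, …, c_n > 0 be storage costs, and let B > 0 be a bit budget. For any set T ⊆ {1,…,n} with Σ_{i∈T} c_i > B and any z ∈ ℝ^n whose support has total cost Σ_{i : z_i ≠ 0} c_i ≤ B, one has ‖f − Σ_i z_i ψ_i‖_∞ ≥ min_{i∈T} |⟨f, ψ_i⟩| / ‖ψ_i‖₁. -/
/-- adaptive quantization / spectrum representation lower bound: let
`{ψ_i}` be an orthonormal basis of `ℝ^n`, `f ∈ ℝ^n`, `c_i > 0` storage costs and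
`B > 0` a bit budget.  For any set `T` with `Σ_{i∈T} c_i > B` and any `z ∈ ℝ^n` whose
support has total cost at most `B`, one has
`min_{i∈T} |⟨f, ψ_i⟩| / ‖ψ_i‖₁ ≤ ‖f − Σ_i z_i ψ_i‖_∞`. -/
theorem stmt10 {n : ℕ} (ψ : Fin n → Fin n → ℝ)
    (horth : ∀ i k, dotp (ψ i) (ψ k) = if i = k then (1 : ℝ) else 0)
    (f : Fin n → ℝ)
    (c : Fin n → ℝ) (hc : ∀ i, 0 < c i) (B : ℝ) (hB : 0 < B)
    (T : Finset (Fin n)) (hT : B < ∑ i ∈ T, c i)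
    (z : Fin n → ℝ)
    (hz : ∑ i ∈ Finset.univ.filter (fun i => z i ≠ 0), c i ≤ B) :
    sInf {y : ℝ | ∃ i ∈ T, y = |dotp f (ψ i)| / l1Norm (ψ i)} ≤
      linfNorm (fun j => f j - ∑ i, z i * ψ i j) := by
  -- there is i ∈ T with z i = 0
  obtain ⟨i, hiT, hzi⟩ : ∃ i ∈ T, z i = 0 := by
    by_contra h
    push_neg at h
    have hsub : T ⊆ Finset.univ.filter (fun i => z i ≠ 0) := by
      intro x hx
      simp [h x hx]
    have : ∑ i ∈ T, c i ≤ ∑ i ∈ Finset.univ.filter (fun i => z i ≠ 0), c i :=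
      Finset.sum_le_sum_of_subset_of_nonneg hsub (fun x _ _ => (hc x).le)
    linarith
  haveI : Nonempty (Fin n) := ⟨i⟩
  set r : Fin n → ℝ := fun j => f j - ∑ k, z k * ψ k j with hr
  set M : ℝ := linfNorm r with hM
  have hle : ∀ j, |r j| ≤ M := by
    intro j
    rw [hM, linfNorm]
    exact le_ciSup (Set.Finite.bddAbove (Set.finite_range (fun j => |r j|))) j
  have hMnn : 0 ≤ M := le_trans (abs_nonneg _) (hle i)
  -- l1Norm ψ i > 0
  have hl1nn : (0:ℝ) ≤ l1Norm (ψ i) := Finset.sum_nonneg fun j _ => abs_nonneg _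
  have hl1pos : 0 < l1Norm (ψ i) := by
    rcases hl1nn.lt_or_eq with h | h
    · exact h
    · exfalso
      have hz0 : ∀ j, ψ i j = 0 := by
        intro j
        have := (Finset.sum_eq_zero_iff_of_nonneg
          (fun j _ => abs_nonneg (ψ i j))).1 h.symm j (Finset.mem_univ j)
        simpa [abs_eq_zero] using this
      have := horth i i
      simp [dotp, hz0] at this
  -- dotp r (ψ i) = dotp f (ψ i)
  have hdot : dotp r (ψ i) = dotp f (ψ i) := by
    have : dotp r (ψ i) = dotp f (ψ i) - ∑ k, z k * dotp (ψ k) (ψ i) := by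
      simp only [dotp, hr, sub_mul, Finset.sum_sub_distrib, Finset.sum_mul,
        Finset.mul_sum]
      rw [Finset.sum_comm]
      ring_nf
    rw [this]
    have : ∑ k, z k * dotp (ψ k) (ψ i) = z i := by
      rw [Finset.sum_eq_single i]
      · simp [horth]
      · intro k _ hk; simp [horth, hk]
      · simp
    rw [this, hzi, sub_zero]
  -- key bound
  have hkey : |dotp f (ψ i)| ≤ M * l1Norm (ψ i) := by
    rw [← hdot]
    calc |dotp r (ψ i)| ≤ ∑ j, |r j * ψ i j| := Finset.abs_sum_le_sum_abs _ _
      _ ≤ ∑ j, M * |ψ i j| := by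
          refine Finset.sum_le_sum fun j _ => ?_
          rw [abs_mul]
          exact mul_le_mul_of_nonneg_right (hle j) (abs_nonneg _)
      _ = M * l1Norm (ψ i) := by rw [l1Norm, Finset.mul_sum]
  have hdiv : |dotp f (ψ i)| / l1Norm (ψ i) ≤ M := by
    rw [div_le_iff₀ hl1pos]
    linarith
  refine le_trans (csInf_le ?_ ⟨i, hiT, rfl⟩) hdiv
  refine ⟨0, fun y hy => ?_⟩
  obtain ⟨k, _, rfl⟩ := hy
  exact div_nonneg (abs_nonneg _) (Finset.sum_nonneg fun j _ => abs_nonneg _)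
end
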